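/- arXiv:0909.2640 — 5 statements merged into one kernel-verified Lean document; each statement's English description precedes it below -/
import Mathlib

section
/- Let A be an algebra over an infinite field F and let f be a noncommutative polynomial in F⟨X_1, X_2, ...⟩. Then the linear span of the set of values f(a_1,...,a_n) for a_i ∈ A is a Lie ideal of A, i.e., it is closed under taking commutators with arbitrary elements of A. -/
/-! The span `M` of the values of `f` is stable under every derivation `D` of `A`, in particular
under `x ↦ x * b - b * x`. For a value `f(a)`, the substitution `aᵢ ↦ aᵢ + t • D aᵢ` makes
`f(a + t • D a)` a polynomial in `t` whose linear coefficient is `D (f a)`. Each specialisation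
`t ∈ F` is again a value of `f`, and since `F` is infinite a polynomial vanishing on `F` is zero, so
every coefficient, read modulo `M` through linear functionals, lies in `M`. -/

open Polynomial

section

variable {F A : Type*} [Field F] [Ring A] [Algebra F A]

noncomputable def evalScalar (t : F) : A[X] →ₐ[F] A :=
  eval₂AlgHom (AlgHom.id F A) (algebraMap F A t) fun c => (Algebra.commutes t c).symm

lemma evalScalar_eq_sum (t : F) (p : A[X]) :
    evalScalar t p = ∑ i ∈ Finset.range (p.natDegree + 1), t ^ i • p.coeff i := by
  refine (eval₂_eq_sum_range (RingHom.id A) _).trans (Finset.sum_congr rfl fun i _ => ?_)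
  rw [RingHom.id_apply, ← map_pow, ← Algebra.commutes, ← Algebra.smul_def]

lemma evalScalar_zero (p : A[X]) : evalScalar (0 : F) p = p.coeff 0 := by
  simp [evalScalar, eval₂_at_zero]

lemma coeff_mem_of_forall_evalScalar_mem [Infinite F] {M : Submodule F A} {p : A[X]}
    (h : ∀ t : F, evalScalar t p ∈ M) (n : ℕ) : p.coeff n ∈ M := by
  by_contra hn
  obtain ⟨φ, hφn, hφM⟩ := M.exists_dual_map_eq_bot_of_notMem hn inferInstance
  have hφ : ∀ x ∈ M, φ x = 0 := fun x hx =>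
    (Submodule.mem_bot F).1 (hφM ▸ Submodule.mem_map_of_mem hx)
  set q : F[X] := ∑ i ∈ Finset.range (p.natDegree + 1), C (φ (p.coeff i)) * X ^ i
  have hq : q = 0 := Polynomial.funext fun t => by
    rw [eval_zero, ← hφ _ (h t), evalScalar_eq_sum, eval_finsetSum, map_sum]
    refine Finset.sum_congr rfl fun i _ => ?_
    rw [eval_C_mul, eval_pow, eval_X, map_smul, smul_eq_mul, mul_comm]
  have hnq : q.coeff n = φ (p.coeff n) := by
    simp only [q, finsetSum_coeff, coeff_C_mul_X_pow]
    rw [Finset.sum_ite_eq]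
    split_ifs with hlt
    · rfl
    · rw [coeff_eq_zero_of_natDegree_lt (by simpa [Nat.lt_succ_iff] using hlt), map_zero]
  exact hφn (by rw [← hnq, hq, coeff_zero])

variable {ι : Type*}

lemma evalScalar_comp_lift (t : F) (a d : ι → A) :
    (evalScalar t).comp (FreeAlgebra.lift F fun i => C (a i) + C (d i) * X) =
      FreeAlgebra.lift F fun i => a i + t • d i := by
  ext i
  simp [evalScalar, eval₂AlgHom, Algebra.smul_def, Algebra.commutes]

lemma coeff_zero_lift_C_add_C_mul_X (a d : ι → A) (g : FreeAlgebra F ι) :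
    (FreeAlgebra.lift F (fun i => C (a i) + C (d i) * X) g).coeff 0 = FreeAlgebra.lift F a g := by
  rw [← evalScalar_zero (F := F), ← AlgHom.comp_apply, evalScalar_comp_lift]
  simp

lemma map_one_eq_zero_of_leibniz (D : A →ₗ[F] A) (hD : ∀ x y, D (x * y) = D x * y + x * D y) :
    D 1 = 0 := by
  simpa using hD 1 1

lemma coeff_one_lift_C_add_C_mul_X (D : A →ₗ[F] A) (hD : ∀ x y, D (x * y) = D x * y + x * D y)
    (a : ι → A) (g : FreeAlgebra F ι) :
    (FreeAlgebra.lift F (fun i => C (a i) + C (D (a i)) * X) g).coeff 1 =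
      D (FreeAlgebra.lift F a g) := by
  induction g using FreeAlgebra.induction with
  | grade0 r =>
    rw [AlgHom.commutes, AlgHom.commutes, Polynomial.algebraMap_apply, coeff_C,
      Algebra.algebraMap_eq_smul_one, map_smul, map_one_eq_zero_of_leibniz D hD, smul_zero]
    rfl
  | grade1 i => simp
  | mul g₁ g₂ ih₁ ih₂ =>
    rw [map_mul, mul_coeff_one, ih₁, ih₂, coeff_zero_lift_C_add_C_mul_X,
      coeff_zero_lift_C_add_C_mul_X, map_mul, hD, add_comm]
  | add g₁ g₂ ih₁ ih₂ => rw [map_add, coeff_add, ih₁, ih₂, map_add, map_add]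

theorem map_mem_span_freeAlgebra_lift_of_leibniz [Infinite F] (D : A →ₗ[F] A)
    (hD : ∀ x y, D (x * y) = D x * y + x * D y) (f : FreeAlgebra F ι) {x : A}
    (hx : x ∈ Submodule.span F {y : A | ∃ a : ι → A, FreeAlgebra.lift F a f = y}) :
    D x ∈ Submodule.span F {y : A | ∃ a : ι → A, FreeAlgebra.lift F a f = y} := by
  set M := Submodule.span F {y : A | ∃ a : ι → A, FreeAlgebra.lift F a f = y}
  refine (Submodule.span_le (p := M.comap D)).2 ?_ hx
  rintro _ ⟨a, rfl⟩
  rw [SetLike.mem_coe, Submodule.mem_comap, ← coeff_one_lift_C_add_C_mul_X D hD]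
  refine coeff_mem_of_forall_evalScalar_mem (fun t => Submodule.subset_span ?_) 1
  exact ⟨fun i => a i + t • D (a i), by rw [← AlgHom.comp_apply, evalScalar_comp_lift]⟩

end

theorem stmt1 {F A : Type*} [Field F] [Infinite F] [Ring A] [Algebra F A]
    (f : FreeAlgebra F ℕ) (x : A)
    (hx : x ∈ Submodule.span F {y : A | ∃ a : ℕ → A, (FreeAlgebra.lift F a) f = y})
    (b : A) :
    x * b - b * x ∈ Submodule.span F {y : A | ∃ a : ℕ → A, (FreeAlgebra.lift F a) f = y} :=
  map_mem_span_freeAlgebra_lift_of_leibniz (LinearMap.mulRight F b - LinearMap.mulLeft F b)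
    (fun x y => by simp only [LinearMap.sub_apply, LinearMap.mulRight_apply,
      LinearMap.mulLeft_apply]; noncomm_ring) f hx
end

section
/- Let S be a simple algebra over a field F with char(F) ≠ 2. If M is a Lie ideal of S that is not contained in the center of S, and M is also a subalgebra of S, then M = S. -/
private lemma prime_aux {S : Type*} [Ring S]
    (hsimple : ∀ I : TwoSidedIdeal S, I = ⊥ ∨ I = ⊤) {a b : S}
    (h : ∀ s : S, a * s * b = 0) : a = 0 ∨ b = 0 := by
  by_cases ha : a = 0
  · exact Or.inl ha
  · right
    set P : Set S := {c : S | ∀ s : S, c * s * b = 0} with hP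
    have h0 : (0 : S) ∈ P := by intro s; simp
    have hadd : ∀ {x y : S}, x ∈ P → y ∈ P → x + y ∈ P := by
      intro x y hx hy s
      have e : (x + y) * s * b = x * s * b + y * s * b := by noncomm_ring
      rw [e, hx s, hy s, add_zero]
    have hneg : ∀ {x : S}, x ∈ P → -x ∈ P := by
      intro x hx s
      have e : (-x) * s * b = -(x * s * b) := by noncomm_ring
      rw [e, hx s, neg_zero]
    have hml : ∀ {x y : S}, y ∈ P → x * y ∈ P := by
      intro x y hy s
      have e : (x * y) * s * b = x * (y * s * b) := by noncomm_ring
      rw [e, hy s, mul_zero]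
    have hmr : ∀ {x y : S}, x ∈ P → x * y ∈ P := by
      intro x y hx s
      have e : (x * y) * s * b = x * (y * s) * b := by noncomm_ring
      rw [e, hx (y * s)]
    rcases hsimple (TwoSidedIdeal.mk' P h0 hadd hneg hml hmr) with hI | hI
    · exfalso
      apply ha
      have hm : a ∈ TwoSidedIdeal.mk' P h0 hadd hneg hml hmr :=
        (TwoSidedIdeal.mem_mk' P h0 hadd hneg hml hmr a).mpr h
      rw [hI] at hm
      exact (TwoSidedIdeal.mem_bot S).mp hm
    · have hm : (1 : S) ∈ TwoSidedIdeal.mk' P h0 hadd hneg hml hmr := by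
        rw [hI]; exact TwoSidedIdeal.mem_top S
      have hs := (TwoSidedIdeal.mem_mk' P h0 hadd hneg hml hmr 1).mp hm
      have := hs 1
      simpa using this

private lemma absorb_aux {F S : Type*} [Field F] [Ring S] [Module F S]
    (hsimple : ∀ I : TwoSidedIdeal S, I = ⊥ ∨ I = ⊤) (M : Submodule F S) {c : S}
    (hc : c ≠ 0) (h : ∀ x y : S, x * c * y ∈ M) : M = ⊤ := by
  set P : Set S := {k : S | ∀ x y : S, x * k * y ∈ M} with hP
  have h0 : (0 : S) ∈ P := by intro x y; simpa using M.zero_mem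
  have hadd : ∀ {k k' : S}, k ∈ P → k' ∈ P → k + k' ∈ P := by
    intro k k' hk hk' x y
    have e : x * (k + k') * y = x * k * y + x * k' * y := by noncomm_ring
    rw [e]; exact M.add_mem (hk x y) (hk' x y)
  have hneg : ∀ {k : S}, k ∈ P → -k ∈ P := by
    intro k hk x y
    have e : x * (-k) * y = -(x * k * y) := by noncomm_ring
    rw [e]; exact M.neg_mem (hk x y)
  have hml : ∀ {r k : S}, k ∈ P → r * k ∈ P := by
    intro r k hk x y
    have e : x * (r * k) * y = (x * r) * k * y := by noncomm_ring
    rw [e]; exact hk (x * r) y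
  have hmr : ∀ {k r : S}, k ∈ P → k * r ∈ P := by
    intro k r hk x y
    have e : x * (k * r) * y = x * k * (r * y) := by noncomm_ring
    rw [e]; exact hk x (r * y)
  rcases hsimple (TwoSidedIdeal.mk' P h0 hadd hneg hml hmr) with hI | hI
  · exfalso
    apply hc
    have hm : c ∈ TwoSidedIdeal.mk' P h0 hadd hneg hml hmr :=
      (TwoSidedIdeal.mem_mk' P h0 hadd hneg hml hmr c).mpr h
    rw [hI] at hm
    exact (TwoSidedIdeal.mem_bot S).mp hm
  · rw [Submodule.eq_top_iff']
    intro s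
    have hm : s ∈ TwoSidedIdeal.mk' P h0 hadd hneg hml hmr := by
      rw [hI]; exact TwoSidedIdeal.mem_top S
    have hs := (TwoSidedIdeal.mem_mk' P h0 hadd hneg hml hmr s).mp hm
    have := hs 1 1
    simpa using this

private lemma half_cancel (F : Type*) {S : Type*} [Field F] [Ring S] [Module F S]
    (h2 : (2 : F) ≠ 0) {g : S} (h : g + g = 0) : g = 0 := by
  have h' : (2 : F) • g = 0 := by rw [two_smul]; exact h
  calc g = ((2 : F)⁻¹ * 2) • g := by rw [inv_mul_cancel₀ h2, one_smul]
    _ = (2 : F)⁻¹ • ((2 : F) • g) := by rw [mul_smul]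
    _ = 0 := by rw [h', smul_zero]

theorem stmt2 {F S : Type*} [Field F] [Ring S] [Algebra F S] (h2 : (2 : F) ≠ 0)
    (hsimple : ∀ I : TwoSidedIdeal S, I = ⊥ ∨ I = ⊤) (hS2 : ∃ a b : S, a * b ≠ 0)
    (M : Submodule F S)
    (hLie : ∀ m ∈ M, ∀ s : S, m * s - s * m ∈ M)
    (hmul : ∀ m ∈ M, ∀ m' ∈ M, m * m' ∈ M)
    (hnc : ¬ (M : Set S) ⊆ Set.center S) :
    M = ⊤ := by
  by_cases hdeg : ∀ u ∈ M, ∀ v ∈ M, ∀ z ∈ M, ∀ y : S,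
      (u*y - y*u) * (v*z - z*v) = (u*z - z*u) * (v*y - y*v)
  · -- degenerate case: contradiction with noncentrality
    exfalso
    rw [Set.not_subset] at hnc
    obtain ⟨a, haM, haZ⟩ := hnc
    rw [Semigroup.mem_center_iff] at haZ
    push_neg at haZ
    obtain ⟨g, hg⟩ := haZ
    have hA : a*g - g*a ≠ 0 := sub_ne_zero_of_ne (fun hh => hg hh.symm)
    -- P0 : [a,y][v,a] = 0 for v ∈ M
    have P0 : ∀ v ∈ M, ∀ y : S, (a*y - y*a) * (v*a - a*v) = 0 := by
      intro v hv y
      have := hdeg a haM v hv a haM y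
      simpa using this
    -- T1 : [a,y] * [s,[v,a]] = 0
    have T1 : ∀ v ∈ M, ∀ y s : S,
        (a*y - y*a) * (s*(v*a - a*v) - (v*a - a*v)*s) = 0 := by
      intro v hv y s
      have hid : (a*y - y*a) * (s*(v*a - a*v) - (v*a - a*v)*s)
          = (a*(y*s) - (y*s)*a) * (v*a - a*v)
            - y * ((a*s - s*a) * (v*a - a*v))
            - ((a*y - y*a) * (v*a - a*v)) * s := by noncomm_ring
      rw [hid, P0 v hv (y*s), P0 v hv s, P0 v hv y]
      simp
    -- T2 : [v,a] is central for v ∈ M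
    have T2 : ∀ v ∈ M, ∀ t : S, t*(v*a - a*v) - (v*a - a*v)*t = 0 := by
      intro v hv t
      have hstep : ∀ s : S, (a*g - g*a) * s * (t*(v*a - a*v) - (v*a - a*v)*t) = 0 := by
        intro s
        have hid : (a*g - g*a) * s * (t*(v*a - a*v) - (v*a - a*v)*t)
            = (a*g - g*a) * ((s*t)*(v*a - a*v) - (v*a - a*v)*(s*t))
              - ((a*g - g*a) * (s*(v*a - a*v) - (v*a - a*v)*s)) * t := by noncomm_ring
        rw [hid, T1 v hv g (s*t), T1 v hv g s]
        simp
      rcases prime_aux hsimple hstep with h | h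
      · exact absurd h hA
      · exact h
    -- centrality of a(ay-ya)-(ay-ya)a
    have hDD : ∀ y t : S, t * (a*(a*y - y*a) - (a*y - y*a)*a)
        = (a*(a*y - y*a) - (a*y - y*a)*a) * t := by
      intro y t
      have h := T2 (a*y - y*a) (hLie a haM y) t
      have hid : t * (a*(a*y - y*a) - (a*y - y*a)*a) - (a*(a*y - y*a) - (a*y - y*a)*a) * t
          = -(t*((a*y - y*a)*a - a*(a*y - y*a)) - ((a*y - y*a)*a - a*(a*y - y*a))*t) := by
        noncomm_ring
      have h0 : t * (a*(a*y - y*a) - (a*y - y*a)*a) - (a*(a*y - y*a) - (a*y - y*a)*a) * t = 0 := by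
        rw [hid, h, neg_zero]
      exact sub_eq_zero.mp h0
    by_cases hD2 : ∀ x : S, a*(a*x - x*a) - (a*x - x*a)*a = 0
    · -- second derivative vanishes
      have hprods : ∀ x y : S, (a*x - x*a) * (a*y - y*a) = 0 := by
        intro x y
        have hid : (a*x - x*a)*(a*y - y*a) + (a*x - x*a)*(a*y - y*a)
            = (a*(a*(x*y) - (x*y)*a) - (a*(x*y) - (x*y)*a)*a)
              - (a*(a*x - x*a) - (a*x - x*a)*a) * y
              - x * (a*(a*y - y*a) - (a*y - y*a)*a) := by noncomm_ring
        have h0 : (a*x - x*a)*(a*y - y*a) + (a*x - x*a)*(a*y - y*a) = 0 := by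
          rw [hid, hD2 (x*y), hD2 x, hD2 y]; simp
        exact half_cancel F h2 h0
      have hfin : ∀ s : S, (a*g - g*a) * s * (a*g - g*a) = 0 := by
        intro s
        have hid : (a*g - g*a) * s * (a*g - g*a)
            = (a*g - g*a) * (a*(s*g) - (s*g)*a) - ((a*g - g*a)*(a*s - s*a)) * g := by
          noncomm_ring
        rw [hid, hprods g (s*g), hprods g s]
        simp
      rcases prime_aux hsimple hfin with h | h <;> exact hA h
    · push_neg at hD2
      obtain ⟨x₀, hz₀⟩ := hD2
      set p : S := a*x₀ - x₀*a with hp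
      set q : S := a*p - p*a with hq
      have hpM : p ∈ M := hLie a haM x₀
      -- q is central
      have hqc : ∀ t : S, t * q = q * t := by
        intro t
        have h := hDD x₀ t
        rw [← hp, ← hq] at h
        exact h
      -- q*p is central
      have hpc : ∀ t : S, t * (q*p) = (q*p) * t := by
        intro t
        have h := T2 (p*p) (hmul p hpM p hpM) t
        have hpq : p * q - q * p = 0 := by rw [hqc p]; simp
        have hid : (t*(q*p) - (q*p)*t) + (t*(q*p) - (q*p)*t)
            = -(t*((p*p)*a - a*(p*p)) - ((p*p)*a - a*(p*p))*t)
              - (t*(p*q - q*p) - (p*q - q*p)*t) := by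
          rw [hq]; noncomm_ring
        have h0 : (t*(q*p) - (q*p)*t) + (t*(q*p) - (q*p)*t) = 0 := by
          rw [hid, h, hpq, neg_zero]; simp
        have := half_cancel F h2 h0
        exact sub_eq_zero.mp this
      have hqcomm : ∀ t : S, q * (p*t - t*p) = 0 := by
        intro t
        have e : q*(p*t - t*p) = ((q*p)*t - t*(q*p)) + (t*q - q*t)*p := by noncomm_ring
        have h1 : (q*p)*t - t*(q*p) = 0 := by rw [hpc t]; simp
        have h2' : t*q - q*t = 0 := by rw [hqc t]; simp
        rw [e, h1, h2']
        simp
      have hfinal : ∀ t s : S, q * s * (p*t - t*p) = 0 := by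
        intro t s
        have e : q*s*(p*t - t*p) = (q*s - s*q)*(p*t - t*p) + s*(q*(p*t - t*p)) := by
          noncomm_ring
        have h1 : q*s - s*q = 0 := by rw [hqc s]; simp
        rw [e, h1, hqcomm t]
        simp
      have hpt : ∀ t : S, p*t - t*p = 0 := by
        intro t
        rcases prime_aux hsimple (hfinal t) with h | h
        · exact absurd h hz₀
        · exact h
      apply hz₀
      have h := hpt a
      have e : q = -(p*a - a*p) := by rw [hq]; noncomm_ring
      rw [e, h, neg_zero]
  · -- non-degenerate case : find an absorbing element
    push_neg at hdeg
    obtain ⟨u, hu, v, hv, z, hz, y, hB⟩ := hdeg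
    have hBne : (u*y - y*u) * (v*z - z*v) - (u*z - z*u) * (v*y - y*v) ≠ 0 :=
      sub_ne_zero_of_ne hB
    have h1 : ∀ p q : S, (u*p - p*u) * (v*q - q*v) ∈ M := fun p q =>
      hmul _ (hLie u hu p) _ (hLie v hv q)
    have hBM : (u*y - y*u) * (v*z - z*v) - (u*z - z*u) * (v*y - y*v) ∈ M :=
      M.sub_mem (h1 y z) (h1 z y)
    have hxB : ∀ x : S, x * ((u*y - y*u) * (v*z - z*v) - (u*z - z*u) * (v*y - y*v)) ∈ M := by
      intro x
      have e1 := h1 (x*y) z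
      have e2 := h1 x (y*z)
      have e3 : ((u*x - x*u)*(v*y - y*v)) * z - z * ((u*x - x*u)*(v*y - y*v)) ∈ M :=
        hLie _ (h1 x y) z
      have e4 := h1 (z*y) x
      have e5 := h1 z (y*x)
      have e6 : ((u*z - z*u)*(v*y - y*v)) * x - x * ((u*z - z*u)*(v*y - y*v)) ∈ M :=
        hLie _ (h1 z y) x
      have e7 : z * ((u*y - y*u)*(v*x - x*v)) ∈ M := hmul z hz _ (h1 y x)
      have e8 : z * ((u*x - x*u)*(v*y - y*v)) ∈ M := hmul z hz _ (h1 x y)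
      have hid : x * ((u*y - y*u) * (v*z - z*v) - (u*z - z*u) * (v*y - y*v))
          = (((u*(x*y) - (x*y)*u) * (v*z - z*v)
              - (u*x - x*u) * (v*(y*z) - (y*z)*v)
              + (((u*x - x*u)*(v*y - y*v)) * z - z * ((u*x - x*u)*(v*y - y*v))))
            + ((u*(z*y) - (z*y)*u) * (v*x - x*v)
              - (u*z - z*u) * (v*(y*x) - (y*x)*v)
              + (((u*z - z*u)*(v*y - y*v)) * x - x * ((u*z - z*u)*(v*y - y*v)))))
            - z * ((u*y - y*u)*(v*x - x*v))
            + z * ((u*x - x*u)*(v*y - y*v)) := by noncomm_ring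
      rw [hid]
      exact M.add_mem (M.sub_mem (M.add_mem
        (M.add_mem (M.sub_mem e1 e2) e3) (M.add_mem (M.sub_mem e4 e5) e6)) e7) e8
    apply absorb_aux hsimple M hBne
    intro x w
    have l1 := hLie _ (hxB x) w
    have l2 : w * (x * ((u*y - y*u) * (v*z - z*v) - (u*z - z*u) * (v*y - y*v))) ∈ M := by
      have e : w * (x * ((u*y - y*u) * (v*z - z*v) - (u*z - z*u) * (v*y - y*v)))
          = (w*x) * ((u*y - y*u) * (v*z - z*v) - (u*z - z*u) * (v*y - y*v)) := by
        noncomm_ring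
      rw [e]; exact hxB (w*x)
    have e : x * ((u*y - y*u) * (v*z - z*v) - (u*z - z*u) * (v*y - y*v)) * w
        = ((x * ((u*y - y*u) * (v*z - z*v) - (u*z - z*u) * (v*y - y*v))) * w
            - w * (x * ((u*y - y*u) * (v*z - z*v) - (u*z - z*u) * (v*y - y*v))))
          + w * (x * ((u*y - y*u) * (v*z - z*v) - (u*z - z*u) * (v*y - y*v))) := by
      noncomm_ring
    rw [e]
    exact M.add_mem l1 l2
end

section
/- Let H be an infinite dimensional complex Hilbert space and let f ∈ ℂ⟨X̄⟩ be a nonconstant noncommutative polynomial. Then the linear span of all values f(a_1,...,a_n) with a_i ∈ B(H) equals B(H). -/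
/-!
Subtracting its constant term, `f` may be replaced by `g = f - f(0)`, whose values span a subspace
of the span of the values of `f`. Since `g` has no constant term, `v * g(a) * w = g(v a w)` whenever
`w * v = 1`, so the span `M` of the values of `g` is stable under `m ↦ v m w`; in particular it is
stable under conjugation by `1 ± e` for `e² = 0`, hence under `⁅e, ·⁆`.

Model `H` as `ℓ²(ι)` with `ι` infinite, and write operators as `2 × 2` matrices via isometries
`V₁, V₂` with orthogonal ranges. Evaluating `g` at the left regular representation of the free
monoid (amplified by `ℓ²(ι)`) and compressing to one coordinate picks out a nonzero coefficient of
`g`, giving `t ∈ M` and `x, y` with `x t y = 1`. Brackets with the square-zero off-diagonal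
matrices `Eᵢⱼ(z) = Vᵢ z Wⱼ` (`i ≠ j`) then push `t` into both off-diagonal corners and give
`E₁₁(ab) - E₂₂(ba) ∈ M`. As every operator on `ℓ²(ℕ × ι) ≅ ℓ²(ι)` is a sum of two commutators
(Halmos: `c ⊕ 0 ⊕ 0 ⊕ ⋯ = ⁅(c ⊕ c ⊕ ⋯) S*, S⁆` for the shift `S`), the diagonal corners lie in
`M` as well.
-/

open scoped lp ENNReal

noncomputable section

namespace NCPolyValues

/-- `V₁, V₂, W₁, W₂` identify `B` with `2 × 2` matrices over `B`, via
`z ↦ !![W₁ * z * V₁, W₁ * z * V₂; W₂ * z * V₁, W₂ * z * V₂]`. -/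
structure CuntzPair (B : Type*) [Ring B] where
  V₁ : B
  V₂ : B
  W₁ : B
  W₂ : B
  W₁_mul_V₁ : W₁ * V₁ = 1
  W₂_mul_V₂ : W₂ * V₂ = 1
  W₁_mul_V₂ : W₁ * V₂ = 0
  W₂_mul_V₁ : W₂ * V₁ = 0
  V₁_mul_W₁_add_V₂_mul_W₂ : V₁ * W₁ + V₂ * W₂ = 1

namespace CuntzPair

variable {B : Type*} [Ring B] (P : CuntzPair B) (z : B)

@[simp] lemma W₁_mul_V₁_mul : P.W₁ * (P.V₁ * z) = z := by rw [← mul_assoc, P.W₁_mul_V₁, one_mul]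
@[simp] lemma W₂_mul_V₂_mul : P.W₂ * (P.V₂ * z) = z := by rw [← mul_assoc, P.W₂_mul_V₂, one_mul]
@[simp] lemma W₁_mul_V₂_mul : P.W₁ * (P.V₂ * z) = 0 := by rw [← mul_assoc, P.W₁_mul_V₂, zero_mul]
@[simp] lemma W₂_mul_V₁_mul : P.W₂ * (P.V₁ * z) = 0 := by rw [← mul_assoc, P.W₂_mul_V₁, zero_mul]

attribute [simp] W₁_mul_V₁ W₂_mul_V₂ W₁_mul_V₂ W₂_mul_V₁

end CuntzPair

section Corners

variable {𝕜 B : Type*} [Field 𝕜] [Ring B] [Algebra 𝕜 B]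

def ConjClosed (M : Submodule 𝕜 B) : Prop :=
  ∀ v w : B, w * v = 1 → ∀ m ∈ M, v * m * w ∈ M

variable {M : Submodule 𝕜 B}

namespace ConjClosed

lemma lie_mem [CharZero 𝕜] (hM : ConjClosed M) {e m : B} (he : e * e = 0) (hm : m ∈ M) :
    ⁅e, m⁆ ∈ M := by
  have h₁ := hM (1 + e) (1 - e) (by simp [sub_mul, mul_add, he]) m hm
  have h₂ := hM (1 - e) (1 + e) (by simp [add_mul, mul_sub, he]) m hm
  have h : (1 + e) * m * (1 - e) - (1 - e) * m * (1 + e) = (2 : 𝕜) • ⁅e, m⁆ := by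
    rw [two_smul, Ring.lie_def]
    noncomm_ring
  simpa [h, inv_smul_smul₀ (two_ne_zero : (2 : 𝕜) ≠ 0)] using
    M.smul_mem (2 : 𝕜)⁻¹ (M.sub_mem h₁ h₂)

lemma V₂_mul_mul_W₁_mem [CharZero 𝕜] (hM : ConjClosed M) (P : CuntzPair B) {t x y : B}
    (ht : t ∈ M) (hxty : x * t * y = 1) (z : B) : P.V₂ * z * P.W₁ ∈ M := by
  have hxty' (w : B) : x * (t * (y * w)) = w := by rw [← mul_assoc, ← mul_assoc, hxty, one_mul]
  have hs : P.V₁ * t * P.W₁ ∈ M := hM _ _ P.W₁_mul_V₁ t ht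
  have hlow (a : B) : P.V₂ * (a * t) * P.W₁ ∈ M := by
    have h := hM (P.V₁ + P.V₂ * a) P.W₁ (by simp [mul_add, ← mul_assoc]) t ht
    convert M.sub_mem h hs using 1
    noncomm_ring
  -- the `(2, 2)` entry `x t y` of this bracket is the identity
  have hdiag : P.V₁ * (y * x * t) * P.W₁ - P.V₂ * P.W₂ ∈ M := by
    convert hM.lie_mem (e := P.V₁ * y * P.W₂) (by simp [mul_assoc]) (hlow x) using 1
    simp [Ring.lie_def, mul_assoc, hxty']
  have hfull := hM.lie_mem (e := P.V₂ * z * P.W₁) (by simp [mul_assoc]) hdiag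
  convert M.sub_mem hfull (hlow (z * y * x)) using 1
  simp [Ring.lie_def, mul_assoc, mul_sub, sub_mul]

lemma V₁_mul_mul_W₂_mem (hM : ConjClosed M) (P : CuntzPair B)
    (hlow : ∀ z, P.V₂ * z * P.W₁ ∈ M) (z : B) : P.V₁ * z * P.W₂ ∈ M := by
  set u := P.V₁ * P.W₂ + P.V₂ * P.W₁
  have hu : u * u = 1 := by
    simp [u, mul_add, add_mul, mul_assoc, add_comm, P.V₁_mul_W₁_add_V₂_mul_W₂]
  convert hM u u hu _ (hlow z) using 1
  simp [u, mul_add, add_mul, mul_assoc]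

lemma V₁_mul_mul_W₁_sub_mem [CharZero 𝕜] (hM : ConjClosed M) (P : CuntzPair B)
    (hlow : ∀ z, P.V₂ * z * P.W₁ ∈ M) (a b : B) :
    P.V₁ * (a * b) * P.W₁ - P.V₂ * (b * a) * P.W₂ ∈ M := by
  convert hM.lie_mem (e := P.V₁ * a * P.W₂) (by simp [mul_assoc]) (hlow b) using 1
  simp [Ring.lie_def, mul_assoc]

theorem eq_top [CharZero 𝕜] (hM : ConjClosed M) (P : CuntzPair B)
    (hcomm : Submodule.span 𝕜 {z | ∃ a b : B, ⁅a, b⁆ = z} = ⊤)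
    {t x y : B} (ht : t ∈ M) (hxty : x * t * y = 1) : M = ⊤ := by
  have hlow := hM.V₂_mul_mul_W₁_mem P ht hxty
  have hup := hM.V₁_mul_mul_W₂_mem P hlow
  have hsub := hM.V₁_mul_mul_W₁_sub_mem P hlow
  have h₂₂ (z : B) : P.V₂ * z * P.W₂ ∈ M := by
    suffices Submodule.span 𝕜 {z | ∃ a b : B, ⁅a, b⁆ = z}
        ≤ M.comap (LinearMap.mulLeft 𝕜 P.V₂ ∘ₗ LinearMap.mulRight 𝕜 P.W₂) by
      simpa [mul_assoc] using this (hcomm ▸ Submodule.mem_top : z ∈ _)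
    refine Submodule.span_le.mpr ?_
    rintro _ ⟨a, b, rfl⟩
    convert M.sub_mem (hsub a b) (by simpa using hsub (a * b) 1) using 1
    simp [Ring.lie_def, mul_assoc, mul_sub, sub_mul]
  have h₁₁ (z : B) : P.V₁ * z * P.W₁ ∈ M := by
    simpa using M.add_mem (hsub z 1) (h₂₂ z)
  refine eq_top_iff.mpr fun T _ => ?_
  have hT : T = (P.V₁ * (P.W₁ * T * P.V₁) * P.W₁ + P.V₁ * (P.W₁ * T * P.V₂) * P.W₂)
      + (P.V₂ * (P.W₂ * T * P.V₁) * P.W₁ + P.V₂ * (P.W₂ * T * P.V₂) * P.W₂) := by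
    conv_lhs => rw [← one_mul T, ← mul_one (1 * T), ← P.V₁_mul_W₁_add_V₂_mul_W₂]
    noncomm_ring
  rw [hT]
  exact M.add_mem (M.add_mem (h₁₁ _) (hup _)) (M.add_mem (hlow _) (h₂₂ _))

end ConjClosed

end Corners

section FreeAlgebra

open FreeAlgebra

variable {R A B X : Type*} [CommRing R] [Ring A] [Algebra R A] [Ring B] [Algebra R B]

lemma mul_lift_mul {v w : A} (h : w * v = 1) (a : X → A) (x : FreeAlgebra R X) :
    v * lift R a x * w = lift R (fun i => v * a i * w) x - algebraMapInv x • (1 - v * w) := by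
  induction x using FreeAlgebra.induction with
  | grade0 r => simp [algebraMapInv, Algebra.smul_def, mul_sub, ← Algebra.commutes r v, mul_assoc]
  | grade1 i => simp [algebraMapInv]
  | add x y hx hy => simp [mul_add, add_mul, hx, hy, add_smul]; abel
  | mul x y hx hy =>
    have hwv (z : A) : w * (v * z) = z := by rw [← mul_assoc, h, one_mul]
    have hw : w * (1 - v * w) = 0 := by rw [mul_sub, ← mul_assoc, h, one_mul, mul_one, sub_self]
    have hv (z : A) : (1 - v * w) * (v * z) = 0 := by
      rw [sub_mul, one_mul, mul_assoc, hwv, sub_self]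
    have hD : (1 - v * w) * (1 - v * w) = 1 - v * w := by
      rw [mul_sub, mul_one, sub_eq_self, hv]
    rw [eq_sub_iff_add_eq] at hx hy
    rw [map_mul, map_mul, map_mul, ← hx, ← hy]
    simp only [add_mul, mul_add, smul_mul_assoc, mul_smul_comm, hD, mul_assoc, hw, hv,
      hwv, mul_zero, smul_zero, add_zero]
    module

lemma lift_zero_apply (x : FreeAlgebra R X) :
    lift R (0 : X → A) x = algebraMap R A (algebraMapInv x) := by
  induction x using FreeAlgebra.induction <;> simp_all [algebraMapInv]

lemma algHom_lift_apply (φ : A →ₐ[R] B) (a : X → A) (x : FreeAlgebra R X) :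
    φ (lift R a x) = lift R (φ ∘ a) x := by
  induction x using FreeAlgebra.induction <;> simp_all

lemma lift_eq_monoidAlgebra_lift (ρ : FreeMonoid X →* A) (x : FreeAlgebra R X) :
    lift R (ρ ∘ FreeMonoid.of) x
      = MonoidAlgebra.lift R A (FreeMonoid X) ρ (equivMonoidAlgebraFreeMonoid x) := by
  induction x using FreeAlgebra.induction <;>
    simp_all [equivMonoidAlgebraFreeMonoid, Algebra.algebraMap_eq_smul_one]

lemma span_range_lift_eq_map (Θ : A ≃ₐ[R] B) (f : FreeAlgebra R X) :
    Submodule.span R (Set.range fun a : X → B => lift R a f)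
      = (Submodule.span R (Set.range fun a : X → A => lift R a f)).map Θ.toLinearMap := by
  have h : (Θ ∘ fun a : X → A => lift R a f) = (fun a : X → B => lift R a f) ∘ (Θ ∘ ·) := by
    funext a
    exact algHom_lift_apply (Θ : A →ₐ[R] B) a f
  rw [Submodule.map_span]
  change _ = Submodule.span R (Θ '' _)
  rw [← Set.range_comp, h, (Θ.surjective.comp_left).range_comp]

lemma span_range_lift_sub_algebraMap_le (f : FreeAlgebra R X) :
    Submodule.span R (Set.range fun a : X → A => lift R a (f - algebraMap R _ (algebraMapInv f)))
      ≤ Submodule.span R (Set.range fun a : X → A => lift R a f) := by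
  refine Submodule.span_le.mpr ?_
  rintro _ ⟨a, rfl⟩
  have h : lift R a (f - algebraMap R _ (algebraMapInv f)) = lift R a f - lift R 0 f := by
    simp [lift_zero_apply]
  simp only [SetLike.mem_coe, h]
  exact Submodule.sub_mem _ (Submodule.subset_span ⟨a, rfl⟩) (Submodule.subset_span ⟨0, rfl⟩)

lemma conjClosed_span_range_lift {𝕜 : Type*} [Field 𝕜] [Algebra 𝕜 B] {g : FreeAlgebra 𝕜 X}
    (hg : algebraMapInv g = 0) :
    ConjClosed (Submodule.span 𝕜 (Set.range fun a : X → B => lift 𝕜 a g)) := by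
  intro v w h m hm
  set L := LinearMap.mulLeft 𝕜 v ∘ₗ LinearMap.mulRight 𝕜 w
  have hle : Submodule.span 𝕜 (Set.range fun a : X → B => lift 𝕜 a g)
      ≤ (Submodule.span 𝕜 (Set.range fun a : X → B => lift 𝕜 a g)).comap L := by
    refine Submodule.span_le.mpr ?_
    rintro _ ⟨a, rfl⟩
    exact Submodule.subset_span ⟨fun i => v * a i * w, by simp [L, ← mul_assoc, mul_lift_mul h, hg]⟩
  simpa [L, mul_assoc] using hle hm

end FreeAlgebra

section Lp

variable {𝕜 E : Type*} [NontriviallyNormedField 𝕜] [NormedAddCommGroup E] [NormedSpace 𝕜 E]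
  {γ δ ε : Type*}

lemma hasSum_norm_sq (f : ℓ²(γ, E)) : HasSum (fun i => ‖f i‖ ^ 2) (‖f‖ ^ 2) := by
  simpa using lp.hasSum_norm (by norm_num : 0 < (2 : ℝ≥0∞).toReal) f

lemma memℓp_two_of_summable {f : γ → E} (h : Summable fun i => ‖f i‖ ^ 2) : Memℓp f 2 :=
  memℓp_gen (by simpa using h)

lemma norm_le_of_hasSum_sq {f : ℓ²(γ, E)} {s C : ℝ} (hC : 0 ≤ C)
    (h : HasSum (fun i => ‖f i‖ ^ 2) s) (hs : s ≤ C ^ 2) : ‖f‖ ≤ C :=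
  (pow_le_pow_iff_left₀ (norm_nonneg f) hC two_ne_zero).mp ((hasSum_norm_sq f).unique h ▸ hs)

lemma hasSum_norm_sq_extend (j : γ ↪ δ) (f : ℓ²(γ, E)) :
    HasSum (fun b => ‖Function.extend j f 0 b‖ ^ 2) (‖f‖ ^ 2) := by
  refine ((hasSum_extend_zero j.injective).mpr (hasSum_norm_sq f)).congr_fun fun b => ?_
  rw [Function.apply_extend (fun x : E => ‖x‖ ^ 2)]
  simp [Function.comp_def]
  rfl

variable (𝕜) in
def lpPush (j : γ ↪ δ) : ℓ²(γ, E) →L[𝕜] ℓ²(δ, E) :=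
  LinearMap.mkContinuous
    { toFun := fun f => ⟨Function.extend j f 0,
        memℓp_two_of_summable (hasSum_norm_sq_extend j f).summable⟩
      map_add' := fun f g => by
        ext b
        change Function.extend j (⇑(f + g)) 0 b
          = Function.extend j (⇑f) 0 b + Function.extend j (⇑g) 0 b
        rcases em (∃ a, j a = b) with ⟨a, rfl⟩ | hb
        · simp only [j.injective.extend_apply]; rfl
        · simp only [Function.extend_apply' _ _ _ hb, Pi.zero_apply, add_zero]
      map_smul' := fun c f => by
        ext b
        change Function.extend j (⇑(c • f)) 0 b = c • Function.extend j (⇑f) 0 b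
        rcases em (∃ a, j a = b) with ⟨a, rfl⟩ | hb
        · simp only [j.injective.extend_apply]; rfl
        · simp only [Function.extend_apply' _ _ _ hb, Pi.zero_apply, smul_zero] }
    1 fun f => by
      rw [one_mul]
      exact norm_le_of_hasSum_sq (norm_nonneg f) (hasSum_norm_sq_extend j f) le_rfl

lemma hasSum_norm_sq_comp (j : γ ↪ δ) (f : ℓ²(δ, E)) :
    HasSum (fun a => ‖f (j a)‖ ^ 2) (∑' a, ‖f (j a)‖ ^ 2) :=
  ((hasSum_norm_sq f).summable.comp_injective j.injective).hasSum

variable (𝕜) in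
def lpPull (j : γ ↪ δ) : ℓ²(δ, E) →L[𝕜] ℓ²(γ, E) :=
  LinearMap.mkContinuous
    { toFun := fun f => ⟨fun a => f (j a), memℓp_two_of_summable (hasSum_norm_sq_comp j f).summable⟩
      map_add' := fun _ _ => by ext; rfl
      map_smul' := fun _ _ => by ext; rfl }
    1 fun f => by
      rw [one_mul]
      refine norm_le_of_hasSum_sq (norm_nonneg f) (hasSum_norm_sq_comp j f) ?_
      exact hasSum_le_inj (g := fun b => ‖f b‖ ^ 2) j j.injective (fun b _ => sq_nonneg ‖f b‖)
        (fun _ => le_rfl) (hasSum_norm_sq_comp j f) (hasSum_norm_sq f)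

@[simp] lemma lpPush_apply (j : γ ↪ δ) (f : ℓ²(γ, E)) (a : γ) : lpPush 𝕜 j f (j a) = f a :=
  j.injective.extend_apply _ _ a

lemma lpPush_apply_of_notMem (j : γ ↪ δ) (f : ℓ²(γ, E)) {b : δ} (hb : b ∉ Set.range j) :
    lpPush 𝕜 j f b = 0 :=
  Function.extend_apply' _ _ _ (by simpa using hb)

@[simp] lemma lpPull_apply (j : γ ↪ δ) (f : ℓ²(δ, E)) (a : γ) : lpPull 𝕜 j f a = f (j a) := rfl

lemma lpPull_comp_lpPush (j : γ ↪ δ) :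
    lpPull 𝕜 j ∘L lpPush 𝕜 j = ContinuousLinearMap.id 𝕜 ℓ²(γ, E) := by
  ext f a
  simp

lemma lpPull_comp_lpPush_of_disjoint {j : γ ↪ δ} {k : ε ↪ δ}
    (h : Disjoint (Set.range j) (Set.range k)) :
    lpPull 𝕜 j ∘L lpPush 𝕜 k = (0 : ℓ²(ε, E) →L[𝕜] _) := by
  ext f a
  simp [lpPush_apply_of_notMem k f (h.notMem_of_mem_left (Set.mem_range_self a))]

lemma lpPush_comp_lpPush (k : γ ↪ δ) (j : δ ↪ ε) :
    lpPush 𝕜 j ∘L lpPush 𝕜 k = (lpPush 𝕜 (k.trans j) : ℓ²(γ, E) →L[𝕜] _) := by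
  ext f c
  by_cases hc : c ∈ Set.range j
  · obtain ⟨b, rfl⟩ := hc
    by_cases hb : b ∈ Set.range k
    · obtain ⟨a, rfl⟩ := hb
      simp only [ContinuousLinearMap.comp_apply, lpPush_apply]
      exact (lpPush_apply (k.trans j) f a).symm
    · rw [ContinuousLinearMap.comp_apply, lpPush_apply, lpPush_apply_of_notMem k f hb,
        lpPush_apply_of_notMem _ f (by rintro ⟨a, ha⟩; exact hb ⟨a, j.injective ha⟩)]
  · rw [ContinuousLinearMap.comp_apply, lpPush_apply_of_notMem j _ hc,
      lpPush_apply_of_notMem _ f (by rintro ⟨a, rfl⟩; exact hc ⟨k a, rfl⟩)]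

lemma lpPull_comp_lpPull (k : γ ↪ δ) (j : δ ↪ ε) :
    lpPull 𝕜 k ∘L lpPull 𝕜 j = (lpPull 𝕜 (k.trans j) : ℓ²(ε, E) →L[𝕜] _) :=
  rfl

lemma lpPush_refl :
    lpPush 𝕜 (Function.Embedding.refl γ) = ContinuousLinearMap.id 𝕜 ℓ²(γ, E) := by
  ext f a
  exact lpPush_apply (Function.Embedding.refl γ) f a

lemma lpPush_comp_lpPull_add_of_isCompl {j : γ ↪ δ} {k : ε ↪ δ}
    (h : IsCompl (Set.range j) (Set.range k)) :
    lpPush 𝕜 j ∘L lpPull 𝕜 j + lpPush 𝕜 k ∘L lpPull 𝕜 k = ContinuousLinearMap.id 𝕜 ℓ²(δ, E) := by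
  ext f b
  rcases h.codisjoint.top_le (Set.mem_univ b) with ⟨a, rfl⟩ | ⟨a, rfl⟩
  · simp [lpPush_apply_of_notMem k _ (h.disjoint.notMem_of_mem_left (Set.mem_range_self a))]
  · simp [lpPush_apply_of_notMem j _ (h.disjoint.notMem_of_mem_right (Set.mem_range_self a))]

lemma lpPush_comp_lpPull_of_surjective {j : γ ↪ δ} (hj : Function.Surjective j) :
    lpPush 𝕜 j ∘L lpPull 𝕜 j = ContinuousLinearMap.id 𝕜 ℓ²(δ, E) := by
  ext f b
  obtain ⟨a, rfl⟩ := hj b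
  simp

variable (𝕜 E) in
def lpCongr (e : γ ≃ δ) : ℓ²(γ, E) ≃L[𝕜] ℓ²(δ, E) :=
  ContinuousLinearEquiv.equivOfInverse' (lpPush 𝕜 e.toEmbedding) (lpPull 𝕜 e.toEmbedding)
    (lpPush_comp_lpPull_of_surjective e.surjective) (lpPull_comp_lpPush _)

section Conj

variable {F G : Type*} [NormedAddCommGroup F] [NormedSpace 𝕜 F]
  [NormedAddCommGroup G] [NormedSpace 𝕜 G]

def conjAlgEquiv (U : F ≃L[𝕜] G) : (F →L[𝕜] F) ≃ₐ[𝕜] (G →L[𝕜] G) :=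
  AlgEquiv.ofLinearEquiv (U.arrowCongr U).toLinearEquiv (by ext; simp) fun S T => by ext; simp

lemma conjAlgEquiv_lpCongr_apply (e : γ ≃ δ) (T : ℓ²(γ, E) →L[𝕜] ℓ²(γ, E)) :
    conjAlgEquiv (lpCongr 𝕜 E e) T = lpPush 𝕜 e.toEmbedding ∘L T ∘L lpPull 𝕜 e.toEmbedding :=
  rfl

end Conj

section Amplification

open Function.Embedding

variable {ν α : Type*}

lemma hasSum_norm_sq_slices (f : ℓ²(ν × α, E)) :
    HasSum (fun n => ‖lpPull 𝕜 (sectR n α) f‖ ^ 2) (‖f‖ ^ 2) :=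
  (hasSum_norm_sq f).prod_fiberwise fun n => hasSum_norm_sq (lpPull 𝕜 (sectR n α) f)

lemma exists_hasSum_norm_sq_amp (c : ℓ²(α, E) →L[𝕜] ℓ²(α, E)) (f : ℓ²(ν × α, E)) :
    ∃ T, HasSum (fun p : ν × α => ‖c (lpPull 𝕜 (sectR p.1 α) f) p.2‖ ^ 2) T ∧
      T ≤ (‖c‖ * ‖f‖) ^ 2 := by
  set g := fun n => c (lpPull 𝕜 (sectR n α) f)
  have hfib (n : ν) : HasSum (fun a => ‖g n a‖ ^ 2) (‖g n‖ ^ 2) := hasSum_norm_sq (g n)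
  have hle (n : ν) : ‖g n‖ ^ 2 ≤ ‖c‖ ^ 2 * ‖lpPull 𝕜 (sectR n α) f‖ ^ 2 := by
    rw [← mul_pow]
    exact pow_le_pow_left₀ (norm_nonneg _) (c.le_opNorm _) 2
  have hbound := (hasSum_norm_sq_slices (𝕜 := 𝕜) f).mul_left (‖c‖ ^ 2)
  have hsum : Summable fun p : ν × α => ‖g p.1 p.2‖ ^ 2 := by
    refine (summable_prod_of_nonneg fun _ => sq_nonneg _).mpr ⟨fun n => (hfib n).summable, ?_⟩
    simp only [fun n => (hfib n).tsum_eq]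
    exact hbound.summable.of_nonneg_of_le (fun _ => sq_nonneg _) hle
  refine ⟨_, hsum.hasSum, ?_⟩
  rw [mul_pow]
  exact hasSum_le hle (hsum.hasSum.prod_fiberwise hfib) hbound

/-- The amplification `c ⊕ c ⊕ ⋯` of `c`, acting on `ℓ²(ν × α) ≅ ⨁_{n : ν} ℓ²(α)`. -/
def amp (c : ℓ²(α, E) →L[𝕜] ℓ²(α, E)) : ℓ²(ν × α, E) →L[𝕜] ℓ²(ν × α, E) :=
  LinearMap.mkContinuous
    { toFun := fun f => ⟨fun p => c (lpPull 𝕜 (sectR p.1 α) f) p.2,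
        memℓp_two_of_summable (exists_hasSum_norm_sq_amp c f).choose_spec.1.summable⟩
      map_add' := fun f g => by ext p; simp; rfl
      map_smul' := fun r f => by ext p; simp }
    ‖c‖ fun f => by
      obtain ⟨T, hT, hTle⟩ := exists_hasSum_norm_sq_amp c f
      exact norm_le_of_hasSum_sq (by positivity) hT hTle

end Amplification

section Halmos

open Function.Embedding ContinuousLinearMap

variable {α ι : Type*}

def shiftEmb : ℕ × α ↪ ℕ × α :=
  (⟨Nat.succ, Nat.succ_injective⟩ : ℕ ↪ ℕ).prodMap (Function.Embedding.refl α)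

lemma lpPush_shift_comp_amp_comp_lpPull_shift_add (c : ℓ²(α, E) →L[𝕜] ℓ²(α, E)) :
    lpPush 𝕜 shiftEmb ∘L amp c ∘L lpPull 𝕜 shiftEmb
      + lpPush 𝕜 (sectR 0 α) ∘L c ∘L lpPull 𝕜 (sectR 0 α) = amp c := by
  ext f ⟨n, a⟩
  simp only [add_apply, comp_apply, lp.coeFn_add, Pi.add_apply]
  cases n with
  | zero =>
    have h0 : ((0 : ℕ), a) ∉ Set.range (shiftEmb (α := α)) := by simp [shiftEmb]
    rw [lpPush_apply_of_notMem _ _ h0, zero_add]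
    exact lpPush_apply (sectR 0 α) _ a
  | succ m =>
    have hm : (m + 1, a) ∉ Set.range (sectR 0 α) := by simp
    rw [lpPush_apply_of_notMem _ _ hm, add_zero]
    exact lpPush_apply shiftEmb _ (m, a)

lemma lpPush_sectR_zero_comp_comp_lpPull_eq_lie (c : ℓ²(α, E) →L[𝕜] ℓ²(α, E)) :
    lpPush 𝕜 (sectR 0 α) ∘L c ∘L lpPull 𝕜 (sectR 0 α)
      = ⁅amp c ∘L lpPull 𝕜 shiftEmb, lpPush 𝕜 shiftEmb⁆ := by
  rw [Ring.lie_def, mul_def, mul_def, comp_assoc, lpPull_comp_lpPush, comp_id,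
    eq_sub_iff_add_eq']
  exact lpPush_shift_comp_amp_comp_lpPull_shift_add c

lemma eq_mul_mul_add_lie {B : Type*} [Ring B] {v w : B} (h : w * v = 1) (z : B) :
    z = v * z * w + ⁅w, v * z⁆ := by
  rw [Ring.lie_def, ← mul_assoc, h, one_mul]
  abel

theorem exists_eq_lie_add_lie (e : ℕ × ι ≃ ι) (z : ℓ²(ι, E) →L[𝕜] ℓ²(ι, E)) :
    ∃ a b c d : ℓ²(ι, E) →L[𝕜] ℓ²(ι, E), z = ⁅a, b⁆ + ⁅c, d⁆ := by
  set j := (sectR 0 ι).trans e.toEmbedding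
  set Θ := conjAlgEquiv (lpCongr 𝕜 E e)
  have hcorner : lpPush 𝕜 j * z * lpPull 𝕜 j
      = ⁅Θ (amp z ∘L lpPull 𝕜 shiftEmb), Θ (lpPush 𝕜 shiftEmb)⁆ := by
    have hΘ : Θ (lpPush 𝕜 (sectR 0 ι) ∘L z ∘L lpPull 𝕜 (sectR 0 ι))
        = lpPush 𝕜 j * z * lpPull 𝕜 j := by
      simp only [Θ, conjAlgEquiv_lpCongr_apply, mul_def, ← comp_assoc, lpPush_comp_lpPush]
      simp only [comp_assoc, lpPull_comp_lpPull]
      rfl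
    rw [← hΘ, lpPush_sectR_zero_comp_comp_lpPull_eq_lie, Ring.lie_def, Ring.lie_def, map_sub,
      map_mul, map_mul]
  refine ⟨Θ (amp z ∘L lpPull 𝕜 shiftEmb), Θ (lpPush 𝕜 shiftEmb), lpPull 𝕜 j, lpPush 𝕜 j * z, ?_⟩
  rw [← hcorner]
  exact eq_mul_mul_add_lie (lpPull_comp_lpPush j) z

end Halmos

section RegularRepresentation

open Function.Embedding ContinuousLinearMap

variable {W ι : Type*} [Monoid W] [IsLeftCancelMul W]

def regEmb (u : W) : W × ι ↪ W × ι := (mulLeftEmbedding u).prodMap (Function.Embedding.refl ι)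

variable (𝕜 E ι) in
def regularRep : W →* (ℓ²(W × ι, E) →L[𝕜] ℓ²(W × ι, E)) where
  toFun u := lpPush 𝕜 (regEmb u)
  map_one' := by
    rw [show regEmb (1 : W) = Function.Embedding.refl (W × ι) by ext <;> simp [regEmb],
      lpPush_refl, one_def]
  map_mul' u v := by
    rw [mul_def, lpPush_comp_lpPush]
    congr 1
    ext <;> simp [regEmb, mul_assoc]

lemma lpPull_comp_regularRep_comp_lpPush [DecidableEq W] (u w : W) :
    lpPull 𝕜 (sectR w ι) ∘L regularRep 𝕜 E ι u ∘L lpPush 𝕜 (sectR 1 ι)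
      = if u = w then ContinuousLinearMap.id 𝕜 _ else 0 := by
  have h : regularRep 𝕜 E ι u ∘L lpPush 𝕜 (sectR 1 ι) = lpPush 𝕜 (sectR u ι) := by
    rw [regularRep, MonoidHom.coe_mk, OneHom.coe_mk, lpPush_comp_lpPush]
    congr 1
    ext <;> simp [regEmb]
  rw [h]
  split_ifs with huw
  · rw [huw, lpPull_comp_lpPush]
  · refine lpPull_comp_lpPush_of_disjoint (Set.disjoint_left.mpr ?_)
    rintro _ ⟨i, rfl⟩ ⟨i', hi'⟩
    exact huw (congrArg Prod.fst hi')

lemma lpPull_comp_lift_regularRep_comp_lpPush (p : MonoidAlgebra 𝕜 W) (w : W) :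
    lpPull 𝕜 (sectR w ι) ∘L MonoidAlgebra.lift 𝕜 _ W (regularRep 𝕜 E ι) p ∘L lpPush 𝕜 (sectR 1 ι)
      = p.coeff w • ContinuousLinearMap.id 𝕜 _ := by
  classical
  induction p using MonoidAlgebra.induction_linear with
  | zero => simp
  | add p q hp hq => simp [add_comp, comp_add, hp, hq, add_smul]
  | single u r =>
    simp [MonoidAlgebra.lift_single, lpPull_comp_regularRep_comp_lpPush, Finsupp.single_apply,
      ite_smul]

end RegularRepresentation

end Lp

section Model

open Function.Embedding ContinuousLinearMap FreeAlgebra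

lemma nonempty_prod_equiv_of_countable (κ ι : Type*) [Countable κ] [Nonempty κ]
    [Infinite ι] : Nonempty (κ × ι ≃ ι) := by
  rw [← Cardinal.lift_mk_eq', Cardinal.mk_prod]
  simp only [Cardinal.lift_mul, Cardinal.lift_lift]
  have hι := Cardinal.aleph0_le_lift.mpr (Cardinal.infinite_iff.mp ‹Infinite ι›)
  exact Cardinal.mul_eq_right hι ((Cardinal.lift_le_aleph0.mpr Cardinal.mk_le_aleph0).trans hι)
    (by simp)

variable {𝕜 E : Type*} [NontriviallyNormedField 𝕜] [NormedAddCommGroup E] [NormedSpace 𝕜 E]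
  {ι : Type*}

def cuntzPairOfEquiv (e : Bool × ι ≃ ι) : CuntzPair (ℓ²(ι, E) →L[𝕜] ℓ²(ι, E)) where
  V₁ := lpPush 𝕜 ((sectR true ι).trans e.toEmbedding)
  V₂ := lpPush 𝕜 ((sectR false ι).trans e.toEmbedding)
  W₁ := lpPull 𝕜 ((sectR true ι).trans e.toEmbedding)
  W₂ := lpPull 𝕜 ((sectR false ι).trans e.toEmbedding)
  W₁_mul_V₁ := lpPull_comp_lpPush _
  W₂_mul_V₂ := lpPull_comp_lpPush _
  W₁_mul_V₂ := lpPull_comp_lpPush_of_disjoint <| by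
    simp [Set.disjoint_left, e.injective.eq_iff]
  W₂_mul_V₁ := lpPull_comp_lpPush_of_disjoint <| by
    simp [Set.disjoint_left, e.injective.eq_iff]
  V₁_mul_W₁_add_V₂_mul_W₂ := lpPush_comp_lpPull_add_of_isCompl <| by
    refine ⟨Set.disjoint_left.mpr ?_, codisjoint_iff.mpr (Set.eq_univ_of_forall fun i => ?_)⟩
    · simp [e.injective.eq_iff]
    · obtain ⟨⟨b, i'⟩, rfl⟩ := e.surjective i
      cases b <;> simp

lemma span_lie_eq_top_of_equiv (e : ℕ × ι ≃ ι) :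
    Submodule.span 𝕜 {z | ∃ a b : ℓ²(ι, E) →L[𝕜] ℓ²(ι, E), ⁅a, b⁆ = z} = ⊤ := by
  refine eq_top_iff.mpr fun z _ => ?_
  obtain ⟨a, b, c, d, rfl⟩ := exists_eq_lie_add_lie e z
  exact Submodule.add_mem _ (Submodule.subset_span ⟨a, b, rfl⟩)
    (Submodule.subset_span ⟨c, d, rfl⟩)

lemma exists_mul_lift_mul_eq_one {X : Type*} (e : FreeMonoid X × ι ≃ ι) {g : FreeAlgebra 𝕜 X}
    (hg : g ≠ 0) : ∃ (a : X → ℓ²(ι, E) →L[𝕜] ℓ²(ι, E)) (x y : ℓ²(ι, E) →L[𝕜] ℓ²(ι, E)),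
      x * lift 𝕜 a g * y = 1 := by
  obtain ⟨w, hw⟩ : ∃ w, (equivMonoidAlgebraFreeMonoid g).coeff w ≠ 0 := by
    by_contra! h
    exact hg (equivMonoidAlgebraFreeMonoid.injective
      (MonoidAlgebra.coeff_injective (Finsupp.ext fun w => by simp [h w])))
  set Θ := conjAlgEquiv (lpCongr 𝕜 E e)
  refine ⟨Θ ∘ regularRep 𝕜 E ι ∘ FreeMonoid.of,
    ((equivMonoidAlgebraFreeMonoid g).coeff w)⁻¹ • (lpPull 𝕜 (sectR w ι) ∘L lpPull 𝕜 e.toEmbedding),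
    lpPush 𝕜 e.toEmbedding ∘L lpPush 𝕜 (sectR 1 ι), ?_⟩
  have hlift : lift 𝕜 (Θ ∘ regularRep 𝕜 E ι ∘ FreeMonoid.of) g
      = Θ (MonoidAlgebra.lift 𝕜 _ _ (regularRep 𝕜 E ι) (equivMonoidAlgebraFreeMonoid g)) := by
    rw [← lift_eq_monoidAlgebra_lift]
    exact (algHom_lift_apply Θ.toAlgHom (regularRep 𝕜 E ι ∘ FreeMonoid.of) g).symm
  have hcancel (T : ℓ²(ι, E) →L[𝕜] ℓ²(FreeMonoid X × ι, E)) :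
      lpPull 𝕜 e.toEmbedding ∘L lpPush 𝕜 e.toEmbedding ∘L T = T := by
    rw [← comp_assoc, lpPull_comp_lpPush, id_comp]
  rw [hlift, conjAlgEquiv_lpCongr_apply]
  simp only [mul_def, smul_comp, comp_assoc, hcancel, lpPull_comp_lift_regularRep_comp_lpPush,
    smul_smul, inv_mul_cancel₀ hw, one_smul, one_def]

theorem span_range_lift_eq_top [CharZero 𝕜] [Infinite ι] {X : Type*} [Countable X]
    (f : FreeAlgebra 𝕜 X) (hf : f ∉ Set.range (algebraMap 𝕜 (FreeAlgebra 𝕜 X))) :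
    Submodule.span 𝕜 (Set.range fun a : X → ℓ²(ι, E) →L[𝕜] ℓ²(ι, E) => lift 𝕜 a f) = ⊤ := by
  set g := f - algebraMap 𝕜 _ (algebraMapInv f)
  have hg : g ≠ 0 := fun h => hf ⟨_, (sub_eq_zero.mp h).symm⟩
  obtain ⟨eBool⟩ := nonempty_prod_equiv_of_countable Bool ι
  obtain ⟨eNat⟩ := nonempty_prod_equiv_of_countable ℕ ι
  obtain ⟨eWord⟩ := nonempty_prod_equiv_of_countable (FreeMonoid X) ι
  obtain ⟨a, x, y, hxty⟩ := exists_mul_lift_mul_eq_one (E := E) eWord hg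
  have hM := (conjClosed_span_range_lift (by simp [g])).eq_top (cuntzPairOfEquiv eBool)
    (span_lie_eq_top_of_equiv eNat) (Submodule.subset_span ⟨a, rfl⟩) hxty
  exact top_unique (hM.symm.le.trans (span_range_lift_sub_algebraMap_le f))

end Model

lemma _root_.HilbertBasis.infinite_of_not_finiteDimensional {ι 𝕜 H : Type*} [RCLike 𝕜]
    [NormedAddCommGroup H] [InnerProductSpace 𝕜 H] (b : HilbertBasis ι 𝕜 H)
    (h : ¬ FiniteDimensional 𝕜 H) : Infinite ι := by
  by_contra hfin
  rw [not_infinite_iff_finite] at hfin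
  have := Fintype.ofFinite ι
  exact h b.toOrthonormalBasis.toBasis.finiteDimensional_of_finite

end NCPolyValues

theorem stmt4 {H : Type*} [NormedAddCommGroup H] [InnerProductSpace ℂ H] [CompleteSpace H]
    (hinf : ¬ FiniteDimensional ℂ H)
    (f : FreeAlgebra ℂ ℕ) (hf : f ∉ Set.range (algebraMap ℂ (FreeAlgebra ℂ ℕ))) :
    Submodule.span ℂ
      {y : H →L[ℂ] H | ∃ a : ℕ → (H →L[ℂ] H), (FreeAlgebra.lift ℂ a) f = y} = ⊤ := by
  obtain ⟨w, b, -⟩ := exists_hilbertBasis ℂ H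
  have := b.infinite_of_not_finiteDimensional hinf
  change Submodule.span ℂ (Set.range fun a : ℕ → (H →L[ℂ] H) => FreeAlgebra.lift ℂ a f) = ⊤
  rw [NCPolyValues.span_range_lift_eq_map
    (NCPolyValues.conjAlgEquiv b.repr.toContinuousLinearEquiv.symm) f,
    NCPolyValues.span_range_lift_eq_top f hf, Submodule.map_top, LinearMap.range_eq_top]
  exact AlgEquiv.surjective _
end
end

section
/- If B is a unital algebra over a field F, then for every n ≥ 1, every element of B is a linear combination of n-th powers b^n with b ∈ B. -/
open Matrix Finset

theorem stmt10 {F B : Type*} [Field F] [CharZero F] [Ring B] [Algebra F B]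
    (n : ℕ) (hn : 1 ≤ n) (x : B) :
    x ∈ Submodule.span F {y : B | ∃ b : B, y = b ^ n} := by
  set S : Set B := {y : B | ∃ b : B, y = b ^ n} with hS
  set f : Fin (n+1) → F := fun i => ((i : ℕ) : F) with hf
  set w : Fin (n+1) → B := fun k => x ^ (n - (k : ℕ)) with hw
  set M : Matrix (Fin (n+1)) (Fin (n+1)) F :=
    fun i k => f i ^ (k : ℕ) * (n.choose k : F) with hM
  set v : Fin (n+1) → B := fun i => (algebraMap F B (f i) + x) ^ n with hv
  have hvS : ∀ i, v i ∈ S := fun i => ⟨algebraMap F B (f i) + x, rfl⟩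
  -- expansion of v in terms of w
  have hexp : ∀ i, v i = ∑ k : Fin (n+1), M i k • w k := by
    intro i
    have hc : Commute (algebraMap F B (f i)) x := Algebra.commutes _ _
    rw [hv]
    simp only
    rw [hc.add_pow, ← Fin.sum_univ_eq_sum_range]
    refine Finset.sum_congr rfl fun k _ => ?_
    simp [hM, hw, Algebra.smul_def, _root_.map_mul, map_pow, mul_assoc,
      (Nat.cast_commute (n.choose k) (x ^ (n - (k:ℕ)))).eq]
  -- M is invertible
  have hMdet : IsUnit M.det := by
    have hMeq : M = Matrix.vandermonde f * Matrix.diagonal (fun k : Fin (n+1) => (n.choose (k : ℕ) : F)) := by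
      ext i k
      rw [Matrix.mul_diagonal]
      rfl
    rw [hMeq, Matrix.det_mul, Matrix.det_diagonal]
    refine (Ne.isUnit ?_)
    apply mul_ne_zero
    · rw [Matrix.det_vandermonde_ne_zero_iff]
      intro a b hab
      have : ((a : ℕ) : F) = ((b : ℕ) : F) := hab
      exact Fin.ext (Nat.cast_injective this)
    · refine Finset.prod_ne_zero_iff.mpr fun k _ => ?_
      exact_mod_cast (Nat.choose_pos (by omega : (k : ℕ) ≤ n)).ne'
  -- invert: each w k is a combination of the v i
  have hkey : ∀ k, w k = ∑ i : Fin (n+1), M⁻¹ k i • v i := by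
    intro k
    calc w k = ∑ j : Fin (n+1), ((1 : Matrix (Fin (n+1)) (Fin (n+1)) F) k j) • w j := by
          simp [Matrix.one_apply, ite_smul]
      _ = ∑ j : Fin (n+1), ((M⁻¹ * M) k j) • w j := by
          rw [Matrix.nonsing_inv_mul M hMdet]
      _ = ∑ j : Fin (n+1), (∑ i : Fin (n+1), M⁻¹ k i * M i j) • w j := by
          simp [Matrix.mul_apply]
      _ = ∑ j : Fin (n+1), ∑ i : Fin (n+1), (M⁻¹ k i * M i j) • w j := by
          simp [Finset.sum_smul]
      _ = ∑ i : Fin (n+1), ∑ j : Fin (n+1), M⁻¹ k i • (M i j • w j) := by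
          rw [Finset.sum_comm]; simp [mul_smul]
      _ = ∑ i : Fin (n+1), M⁻¹ k i • v i := by
          refine Finset.sum_congr rfl fun i _ => ?_
          rw [hexp i, Finset.smul_sum]
  have hx : x = w ⟨n - 1, by omega⟩ := by
    simp [hw]
    rw [show n - (n - 1) = 1 by omega, pow_one]
  rw [hx, hkey]
  exact Submodule.sum_mem _ fun i _ =>
    Submodule.smul_mem _ _ (Submodule.subset_span (hvS i))
end

section
/- Let S and B be F-algebras, A = S ⊗ B, and L a Lie ideal of A. Suppose every element of B is a sum of commutators. Then M = {m ∈ S : m ⊗ b ∈ L for all b ∈ B} satisfies m² ∈ M for every m ∈ M. -/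
open scoped TensorProduct

namespace Algebra.TensorProduct

variable {R S B : Type*} [CommRing R] [Ring S] [Algebra R S] [Ring B] [Algebra R B]

theorem sq_tmul_commutator (m : S) (u v : B) :
    (m ^ 2) ⊗ₜ[R] (u * v - v * u) = m ⊗ₜ[R] u * m ⊗ₜ[R] v - m ⊗ₜ[R] v * m ⊗ₜ[R] u := by
  rw [tmul_mul_tmul, tmul_mul_tmul, ← TensorProduct.tmul_sub, pow_two]

theorem sq_tmul_mem_of_mem_closure_commutators (L : AddSubgroup (S ⊗[R] B))
    (hL : ∀ x ∈ L, ∀ a : S ⊗[R] B, x * a - a * x ∈ L) {m : S} (hm : ∀ b : B, m ⊗ₜ[R] b ∈ L)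
    {b : B} (hb : b ∈ AddSubgroup.closure {x : B | ∃ u v : B, x = u * v - v * u}) :
    (m ^ 2) ⊗ₜ[R] b ∈ L := by
  suffices AddSubgroup.closure {x : B | ∃ u v : B, x = u * v - v * u} ≤
      L.comap (TensorProduct.mk R S B (m ^ 2)).toAddMonoidHom from this hb
  rw [AddSubgroup.closure_le]
  rintro _ ⟨u, v, rfl⟩
  change (m ^ 2) ⊗ₜ[R] (u * v - v * u) ∈ L
  rw [sq_tmul_commutator]
  exact hL _ (hm u) _

end Algebra.TensorProduct

theorem stmt15 {F S B : Type*} [Field F] [Ring S] [Algebra F S] [Ring B] [Algebra F B]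
    (L : Submodule F (S ⊗[F] B))
    (hL : ∀ x ∈ L, ∀ a : S ⊗[F] B, x * a - a * x ∈ L)
    (hcomm : ∀ b : B, b ∈ AddSubgroup.closure {x : B | ∃ u v : B, x = u * v - v * u})
    (m : S) (hm : ∀ b : B, m ⊗ₜ[F] b ∈ L) :
    ∀ b : B, (m ^ 2) ⊗ₜ[F] b ∈ L := fun b =>
  Algebra.TensorProduct.sq_tmul_mem_of_mem_closure_commutators L.toAddSubgroup hL hm (hcomm b)
end
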